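/- Let G be a group generated by a subset S, equipped with the word metric with respect to S. Then G is boundedly presented by S if and only if the metric space (G, word metric) is coarsely simply connected. In particular, a locally compact, compactly generated Hausdorff topological group is compactly presented if and only if it is coarsely simply connected with respect to the word metric of some (equivalently, any) compact generating subset. -/

import Mathlib

/-! Reading a word letter by letter from a point `x` traces a `1`-path in `G`, its trail. A free
cancellation, or a detour along a relation of length at most `n`, changes a trail only up to
`r`-equivalence once `r ≥ max n 2`. So if the relators of a presentation have length at most `n`,
an `r`-loop, after joining consecutive points by geodesic words, becomes the trail of a word in the
normal closure of the relators, a product of conjugates of relators, and contracts.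

Conversely, read a path as the product in the free group of geodesic words between consecutive
points. Modulo the relations of length at most `3 r'`, this product is unchanged by the insertions
of `r'`-equivalence. If `1`-loops are `r'`-contractible, the trail of any word in the kernel is
such a loop, so the word is trivial modulo these short relations.

For locally compact groups, Baire's theorem bounds the word length on compact sets with respect to
any compact generating set, so the word metrics of two compact generating sets are bi-Lipschitz
equivalent, and coarse simple connectedness passes from one to the other. -/

open scoped Pointwise

/-- A group `G` is *boundedly presented* by a subset `S ⊆ G` if there are an integer `n` and a
set `R` of words of length at most `n` in the letters `S ∪ S⁻¹`, each representing the identity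
in `G`, such that the canonical homomorphism from the quotient of the free group on `S` by the
normal closure of `R` onto `G` is an isomorphism. -/
def BoundedlyPresentedBy (G : Type*) [Group G] (S : Set G) : Prop :=
  ∃ (n : ℕ) (R : Set (FreeGroup S)),
    (∀ r ∈ R, ∃ w : List (S × Bool), FreeGroup.mk w = r ∧ w.length ≤ n) ∧
    Function.Surjective (FreeGroup.lift (fun s : S => (s : G))) ∧
    MonoidHom.ker (FreeGroup.lift (fun s : S => (s : G))) = Subgroup.normalClosure R

/-- A topological group is *compactly presented* if it is boundedly presented by some compact
subset. -/
def CompactlyPresented (G : Type*) [Group G] [TopologicalSpace G] : Prop :=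
  ∃ S : Set G, IsCompact S ∧ BoundedlyPresentedBy G S

/-- An `r`-path for the distance function `d`: a nonempty finite sequence of points in which any
two consecutive points are at distance at most `r`. -/
def IsPathOf {X : Type*} (d : X → X → ℝ) (r : ℝ) (p : List X) : Prop :=
  p ≠ [] ∧ p.Chain' (fun a b => d a b ≤ r)

/-- One elementary step of `r`-equivalence: insertion of one point strictly between two
consecutive points of the sequence, both sequences being `r`-paths. -/
def PathInsertStep {X : Type*} (d : X → X → ℝ) (r : ℝ) (p q : List X) : Prop :=
  IsPathOf d r p ∧ IsPathOf d r q ∧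
    ∃ (l₁ l₂ : List X) (y : X), l₁ ≠ [] ∧ l₂ ≠ [] ∧ p = l₁ ++ l₂ ∧ q = l₁ ++ y :: l₂

/-- `r`-equivalence of `r`-paths: the equivalence relation generated by insertion of one
point. -/
def PathEquiv {X : Type*} (d : X → X → ℝ) (r : ℝ) : List X → List X → Prop :=
  Relation.EqvGen (PathInsertStep d r)

/-- `p` is an `r`-loop based at `x`. -/
def IsLoopOf {X : Type*} (d : X → X → ℝ) (r : ℝ) (x : X) (p : List X) : Prop :=
  IsPathOf d r p ∧ p.head? = some x ∧ p.getLast? = some x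

/-- Coarse connectedness with respect to the distance function `d`: for some `r`, any two points
are joined by an `r`-path. -/
def CoarselyConnectedWith {X : Type*} (d : X → X → ℝ) : Prop :=
  ∃ r : ℝ, ∀ x y : X, ∃ p : List X,
    IsPathOf d r p ∧ p.head? = some x ∧ p.getLast? = some y

/-- Coarse simple connectedness with respect to the distance function `d`: coarse connectedness,
and for every `r` there exists `r' ≥ r` such that every `r`-loop is `r'`-equivalent to the
constant loop at its basepoint. -/
def CoarselySimplyConnectedWith {X : Type*} (d : X → X → ℝ) : Prop :=
  CoarselyConnectedWith d ∧
    ∀ r : ℝ, ∃ r' : ℝ, r ≤ r' ∧ ∀ (x : X) (p : List X), IsLoopOf d r x p →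
      ∃ k : ℕ, PathEquiv d r' p (List.replicate (k + 1) x)

/-- A pseudometric space is coarsely simply connected if it is so with respect to its
distance. -/
def CoarselySimplyConnected (X : Type*) [PseudoMetricSpace X] : Prop :=
  CoarselySimplyConnectedWith (dist : X → X → ℝ)

/-- The word metric on a group `G` with respect to a generating subset `S`:
`d(g, h) = min {n | g⁻¹ * h ∈ (S ∪ S⁻¹) ^ n}`. -/
noncomputable def wordDist {G : Type*} [Group G] (S : Set G) (g h : G) : ℝ :=
  (sInf {n : ℕ | g⁻¹ * h ∈ (S ∪ S⁻¹) ^ n} : ℕ)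

universe u v

section CoarsePaths

variable {X : Type*} {d d' : X → X → ℝ} {r s : ℝ} {p q : List X}

theorem isPathOf_iff : IsPathOf d r p ↔ p ≠ [] ∧ p.IsChain (fun a b => d a b ≤ r) := Iff.rfl

theorem IsPathOf.imp (h : ∀ a b, d a b ≤ r → d' a b ≤ s) (hp : IsPathOf d r p) :
    IsPathOf d' s p :=
  ⟨hp.1, (isPathOf_iff.1 hp).2.imp fun a b => h a b⟩

theorem IsPathOf.concat_getLast {z : X} (hp : IsPathOf d r p) (hz : p.getLast? = some z)
    (hzz : d z z ≤ r) : IsPathOf d r (p ++ [z]) := by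
  refine ⟨by simp, List.isChain_append.2 ⟨(isPathOf_iff.1 hp).2, List.isChain_singleton z, ?_⟩⟩
  simp_all

theorem PathEquiv.refl (p : List X) : PathEquiv d r p p := Relation.EqvGen.refl p

theorem PathEquiv.symm (h : PathEquiv d r p q) : PathEquiv d r q p := Relation.EqvGen.symm _ _ h

theorem PathEquiv.trans {l : List X} (h : PathEquiv d r p q) (h' : PathEquiv d r q l) :
    PathEquiv d r p l :=
  Relation.EqvGen.trans _ _ _ h h'

theorem PathEquiv.imp (h : ∀ a b, d a b ≤ r → d' a b ≤ s) (hpq : PathEquiv d r p q) :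
    PathEquiv d' s p q :=
  Relation.EqvGen.mono (fun _ _ ⟨hp, hq, hpq⟩ => ⟨hp.imp h, hq.imp h, hpq⟩) _ _ hpq

theorem isPathOf_append_iff_of_head?_eq (hp : IsPathOf d r p) (hq : IsPathOf d r q)
    (hpq : p.head? = q.head?) (l : List X) : IsPathOf d r (l ++ p) ↔ IsPathOf d r (l ++ q) := by
  simp [isPathOf_iff, List.isChain_append, hp.1, hq.1, (isPathOf_iff.1 hp).2,
    (isPathOf_iff.1 hq).2, hpq]

/-- Insertions never move the first point of a path. -/
theorem PathEquiv.isPathOf_append_iff (h : PathEquiv d r p q) (l : List X) :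
    IsPathOf d r (l ++ p) ↔ IsPathOf d r (l ++ q) := by
  induction h with
  | rel _ _ hab =>
    obtain ⟨ha, hb, m₁, m₂, y, hm₁, -, rfl, rfl⟩ := hab
    exact isPathOf_append_iff_of_head?_eq ha hb (by simp [List.head?_append_of_ne_nil _ hm₁]) l
  | refl => rfl
  | symm _ _ _ ih => exact ih.symm
  | trans _ _ _ _ _ ih₁ ih₂ => exact ih₁.trans ih₂

theorem PathEquiv.append_left {l : List X} (h : PathEquiv d r p q)
    (hl : IsPathOf d r (l ++ p)) : PathEquiv d r (l ++ p) (l ++ q) := by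
  induction h with
  | rel _ _ hab =>
    have hb := (PathEquiv.isPathOf_append_iff (.rel _ _ hab) l).1 hl
    obtain ⟨-, -, m₁, m₂, y, hm₁, hm₂, rfl, rfl⟩ := hab
    exact .rel _ _ ⟨hl, hb, l ++ m₁, m₂, y, by simp [hm₁], hm₂, by simp, by simp⟩
  | refl => exact .refl _
  | symm _ _ hab ih => exact (ih ((PathEquiv.isPathOf_append_iff hab l).2 hl)).symm
  | trans _ _ _ hab _ ih₁ ih₂ =>
    exact (ih₁ hl).trans (ih₂ ((PathEquiv.isPathOf_append_iff hab l).1 hl))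

theorem pathEquiv_cons_insert {a y b : X} {M : List X} (h : IsPathOf d r (a :: y :: b :: M))
    (hab : d a b ≤ r) : PathEquiv d r (a :: b :: M) (a :: y :: b :: M) := by
  have hc := (isPathOf_iff.1 h).2
  simp only [List.isChain_cons_cons] at hc
  exact .rel _ _ ⟨⟨by simp, List.isChain_cons_cons.2 ⟨hab, hc.2.2⟩⟩, h, [a], b :: M, y,
    by simp, by simp, rfl, rfl⟩

theorem pathEquiv_cons_append {a b : X} {l M : List X}
    (h : IsPathOf d r (a :: (l ++ b :: M))) (hl : ∀ z ∈ a :: l, d z b ≤ r) :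
    PathEquiv d r (a :: b :: M) (a :: (l ++ b :: M)) := by
  induction l generalizing a with
  | nil => exact .refl _
  | cons z l ih =>
    have hc := (isPathOf_iff.1 h).2
    rw [List.cons_append, List.isChain_cons_cons] at hc
    have hz : IsPathOf d r (z :: (l ++ b :: M)) := ⟨by simp, hc.2⟩
    have hbM : (b :: M).IsChain (fun a b => d a b ≤ r) :=
      List.IsChain.right_of_append (l₁ := z :: l) hc.2
    have hins : IsPathOf d r (a :: z :: b :: M) :=
      ⟨by simp, List.isChain_cons_cons.2 ⟨hc.1, List.isChain_cons_cons.2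
        ⟨hl z (by simp), hbM⟩⟩⟩
    exact (pathEquiv_cons_insert hins (hl a (by simp))).trans
      ((ih hz fun w hw => hl w (List.mem_cons_of_mem a hw)).append_left (l := [a]) hins)

theorem CoarselySimplyConnectedWith.of_le_mul {C C' : ℝ} (hC : 0 ≤ C) (hC' : 0 ≤ C')
    (h₁ : ∀ a b, d' a b ≤ C * d a b) (h₂ : ∀ a b, d a b ≤ C' * d' a b)
    (h : CoarselySimplyConnectedWith d) : CoarselySimplyConnectedWith d' := by
  have scale {c : ℝ} {e e' : X → X → ℝ} (hc : 0 ≤ c) (he : ∀ a b, e' a b ≤ c * e a b) (t : ℝ) :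
      ∀ a b, e a b ≤ t → e' a b ≤ c * t :=
    fun a b hab => (he a b).trans (mul_le_mul_of_nonneg_left hab hc)
  obtain ⟨⟨r₀, hconn⟩, hloop⟩ := h
  refine ⟨⟨C * r₀, fun x y => ?_⟩, fun r => ?_⟩
  · obtain ⟨p, hp, hx, hy⟩ := hconn x y
    exact ⟨p, hp.imp (scale hC h₁ r₀), hx, hy⟩
  · obtain ⟨r₁, -, hr₁⟩ := hloop (C' * r)
    refine ⟨max r (C * r₁), le_max_left _ _, fun x p hp => ?_⟩
    obtain ⟨k, hk⟩ := hr₁ x p ⟨hp.1.imp (scale hC' h₂ r), hp.2⟩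
    exact ⟨k, hk.imp fun a b hab => (scale hC h₁ r₁ a b hab).trans (le_max_right _ _)⟩

end CoarsePaths

namespace WordMetric

variable {G : Type*} [Group G] {S S' : Set G} {r : ℝ}

def eval (w : List (S × Bool)) : G := FreeGroup.lift (fun s : S => (s : G)) (FreeGroup.mk w)

@[simp] theorem eval_nil : eval ([] : List (S × Bool)) = 1 := map_one _

@[simp] theorem eval_append (w₁ w₂ : List (S × Bool)) : eval (w₁ ++ w₂) = eval w₁ * eval w₂ := by
  simp only [eval, ← FreeGroup.mul_mk, map_mul]

theorem eval_cons (l : S × Bool) (w : List (S × Bool)) : eval (l :: w) = eval [l] * eval w :=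
  eval_append [l] w

@[simp] theorem eval_invRev (w : List (S × Bool)) : eval (FreeGroup.invRev w) = (eval w)⁻¹ := by
  simp only [eval, ← FreeGroup.inv_mk, map_inv]

theorem eval_singleton_mem (l : S × Bool) : eval [l] ∈ S ∪ S⁻¹ := by
  obtain ⟨⟨s, hs⟩, _ | _⟩ := l <;> simp [eval, hs]

theorem exists_eval_singleton_eq {t : G} (ht : t ∈ S ∪ S⁻¹) : ∃ l : S × Bool, eval [l] = t := by
  rcases ht with ht | ht
  · exact ⟨(⟨t, ht⟩, true), by simp [eval]⟩
  · exact ⟨(⟨t⁻¹, ht⟩, false), by simp [eval]⟩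

theorem mem_pow_iff_exists_eval {x : G} {n : ℕ} :
    x ∈ (S ∪ S⁻¹) ^ n ↔ ∃ w : List (S × Bool), w.length = n ∧ eval w = x := by
  induction n generalizing x with
  | zero => simp [Set.mem_one, eq_comm]
  | succ n ih =>
    simp only [pow_succ', Set.mem_mul, ih, List.length_eq_succ_iff]
    constructor
    · rintro ⟨t, ht, _, ⟨w, hw, rfl⟩, rfl⟩
      obtain ⟨l, rfl⟩ := exists_eval_singleton_eq ht
      exact ⟨l :: w, ⟨l, w, rfl, hw⟩, eval_cons l w⟩
    · rintro ⟨_, ⟨l, w, rfl, hw⟩, rfl⟩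
      exact ⟨_, eval_singleton_mem l, _, ⟨w, hw, rfl⟩, (eval_cons l w).symm⟩

theorem lift_surjective_of_closure_eq_top (hS : Subgroup.closure S = ⊤) :
    Function.Surjective (FreeGroup.lift (fun s : S => (s : G))) := by
  rw [← MonoidHom.range_eq_top, FreeGroup.range_lift_eq_closure, Subtype.range_coe, hS]

theorem exists_eval_eq (hS : Subgroup.closure S = ⊤) (x : G) :
    ∃ w : List (S × Bool), eval w = x := by
  classical
  obtain ⟨z, rfl⟩ := lift_surjective_of_closure_eq_top hS x
  exact ⟨z.toWord, by rw [eval, FreeGroup.mk_toWord]⟩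

variable (S) in
noncomputable def wordLength (x : G) : ℕ := sInf {n : ℕ | x ∈ (S ∪ S⁻¹) ^ n}

theorem wordDist_eq_wordLength (g h : G) : wordDist S g h = wordLength S (g⁻¹ * h) := rfl

theorem wordLength_eval_le (w : List (S × Bool)) : wordLength S (eval w) ≤ w.length :=
  Nat.sInf_le (mem_pow_iff_exists_eval.2 ⟨w, rfl, rfl⟩)

theorem wordLength_le_one_of_mem {t : G} (ht : t ∈ S ∪ S⁻¹) : wordLength S t ≤ 1 :=
  Nat.sInf_le (show t ∈ (S ∪ S⁻¹) ^ 1 by rwa [pow_one])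

@[simp] theorem wordLength_one : wordLength S (1 : G) = 0 :=
  Nat.le_zero.1 (wordLength_eval_le ([] : List (S × Bool)))

@[simp] theorem wordDist_self (x : G) : wordDist S x x = 0 := by
  simp [wordDist_eq_wordLength]

theorem exists_eval_eq_length_eq (hS : Subgroup.closure S = ⊤) (x : G) :
    ∃ w : List (S × Bool), eval w = x ∧ w.length = wordLength S x := by
  obtain ⟨w, rfl⟩ := exists_eval_eq hS x
  obtain ⟨v, hv, hvw⟩ := mem_pow_iff_exists_eval.1
    (Nat.sInf_mem (s := {n | eval w ∈ (S ∪ S⁻¹) ^ n}) ⟨_, mem_pow_iff_exists_eval.2 ⟨w, rfl, rfl⟩⟩)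
  exact ⟨v, hvw, hv⟩

theorem wordLength_mul_le (hS : Subgroup.closure S = ⊤) (x y : G) :
    wordLength S (x * y) ≤ wordLength S x + wordLength S y := by
  obtain ⟨v, rfl, hv⟩ := exists_eval_eq_length_eq hS x
  obtain ⟨w, rfl, hw⟩ := exists_eval_eq_length_eq hS y
  simpa [hv, hw] using wordLength_eval_le (v ++ w)

variable (S) in
noncomputable def geodesicWord (x : G) : List (S × Bool) :=
  Classical.epsilon fun w => eval w = x ∧ w.length = wordLength S x

theorem eval_geodesicWord (hS : Subgroup.closure S = ⊤) (x : G) : eval (geodesicWord S x) = x :=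
  (Classical.epsilon_spec (exists_eval_eq_length_eq hS x)).1

theorem length_geodesicWord (hS : Subgroup.closure S = ⊤) (x : G) :
    (geodesicWord S x).length = wordLength S x :=
  (Classical.epsilon_spec (exists_eval_eq_length_eq hS x)).2

@[simp] theorem geodesicWord_one (hS : Subgroup.closure S = ⊤) : geodesicWord S (1 : G) = [] := by
  simpa using length_geodesicWord hS (1 : G)

theorem length_geodesicWord_le_floor (hS : Subgroup.closure S = ⊤) {g h : G}
    (hgh : wordDist S g h ≤ r) : (geodesicWord S (g⁻¹ * h)).length ≤ ⌊r⌋₊ :=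
  length_geodesicWord hS _ ▸ Nat.le_floor hgh

def trailInit (x : G) : List (S × Bool) → List G
  | [] => []
  | l :: w => x :: trailInit (x * eval [l]) w

/-- The path `x, x * s₁, x * s₁ * s₂, …` traced by the word `s₁ s₂ ⋯` from `x`, with its endpoint
doubled: `r`-equivalence never moves the endpoints of a path, and the extra copy lets the last letter
of the word be changed. -/
def trail (x : G) : List (S × Bool) → List G
  | [] => [x, x]
  | l :: w => x :: trail (x * eval [l]) w

theorem trail_append (x : G) (w₁ w₂ : List (S × Bool)) :
    trail x (w₁ ++ w₂) = trailInit x w₁ ++ trail (x * eval w₁) w₂ := by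
  induction w₁ generalizing x with
  | nil => simp [trailInit]
  | cons l w ih =>
    rw [List.cons_append, trail, ih, trailInit, eval_cons l w, mul_assoc, List.cons_append]

theorem trail_eq_cons_tail (x : G) (w : List (S × Bool)) : trail x w = x :: (trail x w).tail := by
  cases w <;> rfl

theorem exists_trail_eq_cons_cons (x : G) (w : List (S × Bool)) :
    ∃ b M, trail x w = x :: b :: M := by
  cases w with
  | nil => exact ⟨x, [], rfl⟩
  | cons l w => exact ⟨x * eval [l], _, by rw [trail, ← trail_eq_cons_tail]⟩

theorem head?_trail (x : G) (w : List (S × Bool)) : (trail x w).head? = some x := by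
  rw [trail_eq_cons_tail]; rfl

theorem getLast?_trail (x : G) (w : List (S × Bool)) :
    (trail x w).getLast? = some (x * eval w) := by
  induction w generalizing x with
  | nil => simp [trail]
  | cons l w ih =>
    rw [trail, trail_eq_cons_tail, List.getLast?_cons_cons, ← trail_eq_cons_tail, ih,
      eval_cons l w, mul_assoc]

theorem isPathOf_trail (hr : 1 ≤ r) (x : G) (w : List (S × Bool)) :
    IsPathOf (wordDist S) r (trail x w) := by
  refine isPathOf_iff.2 ⟨by rw [trail_eq_cons_tail]; simp, ?_⟩
  induction w generalizing x with
  | nil => simp [trail]; linarith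
  | cons l w ih =>
    rw [trail, trail_eq_cons_tail, List.isChain_cons_cons, ← trail_eq_cons_tail]
    refine ⟨?_, ih _⟩
    rw [wordDist_eq_wordLength, inv_mul_cancel_left]
    exact le_trans (by exact_mod_cast wordLength_le_one_of_mem (eval_singleton_mem l)) hr

theorem wordDist_le_of_mem_trailInit {x z : G} {w : List (S × Bool)} (hz : z ∈ trailInit x w) :
    wordDist S z (x * eval w) ≤ w.length := by
  induction w generalizing x with
  | nil => simp [trailInit] at hz
  | cons l w ih =>
    rcases List.mem_cons.1 hz with rfl | hz
    · rw [wordDist_eq_wordLength, inv_mul_cancel_left]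
      exact_mod_cast wordLength_eval_le _
    · rw [eval_cons, ← mul_assoc]
      exact (ih hz).trans (by simp)

theorem coarselyConnectedWith_wordDist (hS : Subgroup.closure S = ⊤) :
    CoarselyConnectedWith (wordDist S) := by
  refine ⟨1, fun x y => ?_⟩
  obtain ⟨w, hw⟩ := exists_eval_eq hS (x⁻¹ * y)
  exact ⟨trail x w, isPathOf_trail le_rfl x w, head?_trail x w, by
    rw [getLast?_trail, hw, mul_inv_cancel_left]⟩

theorem pathEquiv_cons_trail (hr : 1 ≤ r) {v : List (S × Bool)} (hv : (v.length : ℝ) ≤ r)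
    (x : G) (w : List (S × Bool)) :
    PathEquiv (wordDist S) r (x :: trail (x * eval v) w) (trail x (v ++ w)) := by
  obtain ⟨b, M, hbM⟩ := exists_trail_eq_cons_cons (x * eval v) w
  have hpath := isPathOf_trail hr x (v ++ w)
  rw [trail_append, hbM] at hpath ⊢
  cases v with
  | nil =>
    simp only [eval_nil, mul_one, trailInit, List.nil_append] at hpath hbM ⊢
    have hxx : wordDist S x x ≤ r := by simp; linarith
    have hc := (isPathOf_iff.1 hpath).2
    exact (pathEquiv_cons_insert ⟨by simp, List.isChain_cons_cons.2 ⟨hxx, hc⟩⟩ hc.rel).symm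
  | cons l v =>
    exact pathEquiv_cons_append hpath fun z hz =>
      (wordDist_le_of_mem_trailInit hz).trans hv

theorem pathEquiv_trail_append_of_eval_eq_one (hr : 1 ≤ r) {v : List (S × Bool)}
    (hv : (v.length : ℝ) ≤ r) (hv₁ : eval v = 1) (x : G) (u w : List (S × Bool)) :
    PathEquiv (wordDist S) r (trail x (u ++ v ++ w)) (trail x (u ++ w)) := by
  have hpath := isPathOf_trail hr x (u ++ (v ++ w))
  rw [List.append_assoc, trail_append x u (v ++ w), trail_append x u w]
  rw [trail_append x u (v ++ w)] at hpath
  set y := x * eval u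
  have hins := pathEquiv_cons_trail hr hv y w
  have hdup := pathEquiv_cons_trail hr (v := []) (by simp; linarith) y w
  rw [hv₁, mul_one] at hins
  rw [eval_nil, mul_one, List.nil_append] at hdup
  exact (hins.symm.trans hdup).append_left hpath

theorem pathEquiv_trail_of_red (hr : 2 ≤ r) (x : G) {w w' : List (S × Bool)}
    (h : FreeGroup.Red w w') : PathEquiv (wordDist S) r (trail x w) (trail x w') := by
  induction h with
  | refl => exact .refl _
  | tail _ hstep ih =>
    refine ih.trans ?_
    obtain @⟨L₁, L₂, s, b⟩ := hstep
    have hcancel : eval [(s, b), (s, !b)] = 1 := by cases b <;> simp [eval]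
    simpa using pathEquiv_trail_append_of_eval_eq_one (by linarith) (by simpa using hr) hcancel
      x L₁ L₂

theorem pathEquiv_trail_of_mk_eq (hr : 2 ≤ r) (x : G) {w w' : List (S × Bool)}
    (h : FreeGroup.mk w = FreeGroup.mk w') : PathEquiv (wordDist S) r (trail x w) (trail x w') :=
  have ⟨_, h₁, h₂⟩ := FreeGroup.Red.exact.1 h
  (pathEquiv_trail_of_red hr x h₁).trans (pathEquiv_trail_of_red hr x h₂).symm

theorem pathEquiv_trail_of_mk_eq_conj (hr : 2 ≤ r) (x : G) (c : FreeGroup S)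
    {v w : List (S × Bool)} (hv : (v.length : ℝ) ≤ r) (hv₁ : eval v = 1)
    (hw : FreeGroup.mk w = c * FreeGroup.mk v * c⁻¹) :
    PathEquiv (wordDist S) r (trail x w) [x, x] := by
  classical
  have hc : FreeGroup.mk c.toWord = c := FreeGroup.mk_toWord
  have h₁ := pathEquiv_trail_of_mk_eq hr x (w' := c.toWord ++ v ++ FreeGroup.invRev c.toWord)
    (by rw [hw, ← FreeGroup.mul_mk, ← FreeGroup.mul_mk, ← FreeGroup.inv_mk, hc])
  have h₂ := pathEquiv_trail_of_mk_eq hr x (w := c.toWord ++ FreeGroup.invRev c.toWord)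
    (w' := []) (by rw [← FreeGroup.mul_mk, ← FreeGroup.inv_mk, hc, mul_inv_cancel]; rfl)
  exact h₁.trans ((pathEquiv_trail_append_of_eval_eq_one (by linarith) hv hv₁ x _ _).trans h₂)

theorem pathEquiv_trail_append (hr : 1 ≤ r) (x : G) {w₁ w₂ : List (S × Bool)}
    (he : eval w₁ = 1) (h₁ : PathEquiv (wordDist S) r (trail x w₁) [x, x])
    (h₂ : PathEquiv (wordDist S) r (trail x w₂) [x, x]) :
    PathEquiv (wordDist S) r (trail x (w₁ ++ w₂)) [x, x] := by
  have hsplit (v : List (S × Bool)) : trail x (w₁ ++ v) = trailInit x w₁ ++ trail x v := by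
    rw [trail_append, he, mul_one]
  have hpath := isPathOf_trail hr x (w₁ ++ w₂)
  rw [hsplit] at hpath
  have h := h₂.append_left hpath
  have hw₁ : trail x w₁ = trailInit x w₁ ++ [x, x] := by simpa [trail] using hsplit []
  rw [← hsplit, ← hw₁] at h
  exact h.trans h₁

theorem pathEquiv_trail_of_mem_normalClosure (hr : 2 ≤ r) {R : Set (FreeGroup S)}
    (hRker : R ⊆ (FreeGroup.lift (fun s : S => (s : G))).ker)
    (hRlen : ∀ ρ ∈ R, ∃ v : List (S × Bool), FreeGroup.mk v = ρ ∧ (v.length : ℝ) ≤ r)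
    (x : G) {w : List (S × Bool)} (hw : FreeGroup.mk w ∈ Subgroup.normalClosure R) :
    PathEquiv (wordDist S) r (trail x w) [x, x] := by
  classical
  have hconj {z : FreeGroup S} (hz : z ∈ Group.conjugatesOfSet R) : ∃ c v,
      (v.length : ℝ) ≤ r ∧ eval v = 1 ∧ z = c * FreeGroup.mk v * c⁻¹ := by
    obtain ⟨ρ, hρ, hρz⟩ := Group.mem_conjugatesOfSet_iff.1 hz
    obtain ⟨c, rfl⟩ := isConj_iff.1 hρz
    obtain ⟨v, rfl, hv⟩ := hRlen _ hρ
    exact ⟨c, v, hv, hRker hρ, rfl⟩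
  suffices ∀ z ∈ Subgroup.normalClosure R, ∀ w : List (S × Bool), FreeGroup.mk w = z →
      PathEquiv (wordDist S) r (trail x w) [x, x] from this _ hw w rfl
  intro z hz
  induction hz using Subgroup.closure_induction'' with
  | mem z hz =>
    obtain ⟨c, v, hv, hv₁, rfl⟩ := hconj hz
    exact fun w hw => pathEquiv_trail_of_mk_eq_conj hr x c hv hv₁ hw
  | inv_mem z hz =>
    obtain ⟨c, v, hv, hv₁, rfl⟩ := hconj hz
    refine fun w hw => pathEquiv_trail_of_mk_eq_conj hr x c (v := FreeGroup.invRev v)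
      (by simpa using hv) (by rw [eval_invRev, hv₁, inv_one]) ?_
    rw [hw, ← FreeGroup.inv_mk]
    group
  | one => exact fun w hw => pathEquiv_trail_of_mk_eq hr x hw
  | mul z₁ z₂ hz₁ _ ih₁ ih₂ =>
    intro w hw
    have he : eval z₁.toWord = 1 := by
      rw [eval, FreeGroup.mk_toWord]
      exact Subgroup.normalClosure_le_normal hRker hz₁
    exact (pathEquiv_trail_of_mk_eq hr x (w' := z₁.toWord ++ z₂.toWord)
      (by rw [hw, ← FreeGroup.mul_mk, FreeGroup.mk_toWord, FreeGroup.mk_toWord])).trans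
      (pathEquiv_trail_append (by linarith) x he (ih₁ _ FreeGroup.mk_toWord)
        (ih₂ _ FreeGroup.mk_toWord))

theorem exists_pathEquiv_trail (hS : Subgroup.closure S = ⊤) {r' : ℝ} (hr' : 1 ≤ r')
    (hrr' : r ≤ r') {g z : G} {q : List G} (hq : IsPathOf (wordDist S) r (g :: q))
    (hz : (g :: q).getLast? = some z) :
    ∃ w : List (S × Bool), eval w = g⁻¹ * z ∧
      PathEquiv (wordDist S) r' ((g :: q) ++ [z]) (trail g w) := by
  induction q generalizing g with
  | nil =>
    obtain rfl : g = z := by simpa using hz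
    exact ⟨[], by simp, .refl _⟩
  | cons g' q ih =>
    have hc := (isPathOf_iff.1 hq).2
    rw [List.isChain_cons_cons] at hc
    obtain ⟨w', hw', h'⟩ := ih ⟨by simp, hc.2⟩ (by simpa [List.getLast?_cons_cons] using hz)
    set w₀ := geodesicWord S (g⁻¹ * g')
    have hw₀ : g * eval w₀ = g' := by rw [eval_geodesicWord hS, mul_inv_cancel_left]
    have hlen : (w₀.length : ℝ) ≤ r' := by
      rw [length_geodesicWord hS]; exact hc.1.trans hrr'
    have hpath : IsPathOf (wordDist S) r' ([g] ++ ((g' :: q) ++ [z])) :=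
      (hq.imp fun a b hab => hab.trans hrr').concat_getLast hz (by simp; linarith)
    have hins := pathEquiv_cons_trail hr' hlen g w'
    rw [hw₀] at hins
    exact ⟨w₀ ++ w', by rw [eval_append, hw', ← mul_assoc, ← hw₀]; group,
      (h'.append_left hpath).trans hins⟩

variable (S) in
def shortRelators (n : ℕ) : Set (FreeGroup S) :=
  {z | ∃ w : List (S × Bool), FreeGroup.mk w = z ∧ w.length ≤ n ∧ eval w = 1}

variable (S) in
abbrev ShortPresentation (n : ℕ) := FreeGroup S ⧸ Subgroup.normalClosure (shortRelators S n)

theorem mk_eq_mk_of_eval_eq {n : ℕ} {w₁ w₂ : List (S × Bool)} (hn : w₁.length + w₂.length ≤ n)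
    (he : eval w₁ = eval w₂) :
    (FreeGroup.mk w₁ : ShortPresentation S n) = FreeGroup.mk w₂ := by
  refine QuotientGroup.eq.2 (Subgroup.subset_normalClosure ⟨FreeGroup.invRev w₁ ++ w₂, ?_, ?_, ?_⟩)
  · rw [← FreeGroup.mul_mk, ← FreeGroup.inv_mk]
  · simpa using hn
  · simp [he]

variable (S) in
noncomputable def pathWord : List G → FreeGroup S
  | a :: b :: t => FreeGroup.mk (geodesicWord S (a⁻¹ * b)) * pathWord (b :: t)
  | _ => 1

theorem pathWord_append_cons (l : List G) (a : G) (M : List G) :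
    pathWord S (l ++ a :: M) = pathWord S (l ++ [a]) * pathWord S (a :: M) := by
  induction l with
  | nil => simp [pathWord]
  | cons c l ih => cases l <;> simp_all [pathWord, mul_assoc]

theorem pathWord_eq_of_pathInsertStep (hS : Subgroup.closure S = ⊤) {n : ℕ}
    (hn : 3 * ⌊r⌋₊ ≤ n) {p q : List G} (h : PathInsertStep (wordDist S) r p q) :
    (pathWord S p : ShortPresentation S n) = pathWord S q := by
  obtain ⟨hp, hq, l₁, l₂, y, h₁, h₂, rfl, rfl⟩ := h
  obtain ⟨l₀, a, rfl⟩ : ∃ l₀ a, l₁ = l₀ ++ [a] := ⟨_, _, (List.dropLast_append_getLast h₁).symm⟩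
  obtain ⟨b, t, rfl⟩ := List.exists_cons_of_ne_nil h₂
  have hp' := (isPathOf_iff.1 hp).2
  have hq' := (isPathOf_iff.1 hq).2
  simp only [List.append_assoc, List.singleton_append] at hp' hq' ⊢
  obtain ⟨-, hab, -⟩ := List.isChain_append_cons_cons.1 hp'
  obtain ⟨-, hay, hyb⟩ := List.isChain_append_cons_cons.1 hq'
  have key : (FreeGroup.mk (geodesicWord S (a⁻¹ * y)) * FreeGroup.mk (geodesicWord S (y⁻¹ * b)) :
      ShortPresentation S n) = FreeGroup.mk (geodesicWord S (a⁻¹ * b)) := by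
    rw [← QuotientGroup.mk_mul, FreeGroup.mul_mk]
    refine mk_eq_mk_of_eval_eq ?_ (by simp [eval_geodesicWord hS])
    have := length_geodesicWord_le_floor hS hab
    have := length_geodesicWord_le_floor hS hay
    have := length_geodesicWord_le_floor hS hyb.rel
    simp only [List.length_append]
    omega
  rw [pathWord_append_cons l₀ a (b :: t), pathWord_append_cons l₀ a (y :: b :: t)]
  simp only [pathWord, QuotientGroup.mk_mul, ← key, mul_assoc]

theorem PathEquiv.pathWord_eq (hS : Subgroup.closure S = ⊤) {n : ℕ}
    (hn : 3 * ⌊r⌋₊ ≤ n) {p q : List G} (h : PathEquiv (wordDist S) r p q) :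
    (pathWord S p : ShortPresentation S n) = pathWord S q := by
  induction h with
  | rel _ _ hab => exact pathWord_eq_of_pathInsertStep hS hn hab
  | refl => rfl
  | symm _ _ _ ih => exact ih.symm
  | trans _ _ _ _ _ ih₁ ih₂ => exact ih₁.trans ih₂

theorem pathWord_replicate (hS : Subgroup.closure S = ⊤) (x : G) (k : ℕ) :
    pathWord S (List.replicate k x) = 1 := by
  induction k with
  | zero => rfl
  | succ k ih =>
    cases k <;> simp_all [List.replicate_succ, pathWord, geodesicWord_one hS, ← FreeGroup.one_eq_mk]

theorem pathWord_trail (hS : Subgroup.closure S = ⊤) {n : ℕ} (hn : 2 ≤ n) (x : G)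
    (w : List (S × Bool)) :
    (pathWord S (trail x w) : ShortPresentation S n) = FreeGroup.mk w := by
  induction w generalizing x with
  | nil => simp [trail, pathWord, geodesicWord_one hS]
  | cons l w ih =>
    have hl : (FreeGroup.mk (geodesicWord S (eval [l])) : ShortPresentation S n) =
        FreeGroup.mk [l] := by
      refine mk_eq_mk_of_eval_eq ?_ (eval_geodesicWord hS _)
      have := wordLength_le_one_of_mem (eval_singleton_mem l)
      rw [length_geodesicWord hS, List.length_singleton]
      omega
    rw [trail, trail_eq_cons_tail, pathWord, ← trail_eq_cons_tail, QuotientGroup.mk_mul, ih,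
      inv_mul_cancel_left, hl, ← QuotientGroup.mk_mul, FreeGroup.mul_mk, List.singleton_append]

theorem mem_pow_wordLength (hS : Subgroup.closure S = ⊤) (x : G) :
    x ∈ (S ∪ S⁻¹) ^ wordLength S x :=
  have ⟨w, hw, hlen⟩ := exists_eval_eq_length_eq hS x
  mem_pow_iff_exists_eval.2 ⟨w, hlen, hw⟩

theorem wordLength_le_of_mem_pow (hS : Subgroup.closure S = ⊤) {m : ℕ} {v : G}
    (hv : v ∈ (insert 1 (S ∪ S⁻¹)) ^ m) : wordLength S v ≤ m := by
  induction m generalizing v with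
  | zero => simp_all [Set.mem_one]
  | succ m ih =>
    obtain ⟨a, ha, b, hb, rfl⟩ := hv
    refine (wordLength_mul_le hS a b).trans (add_le_add (ih ha) ?_)
    rcases hb with rfl | hb
    · simp
    · exact wordLength_le_one_of_mem hb

theorem wordLength_eval_le_mul (hS' : Subgroup.closure S' = ⊤) {B : ℕ}
    (hB : ∀ t ∈ S ∪ S⁻¹, wordLength S' t ≤ B) (w : List (S × Bool)) :
    wordLength S' (eval w) ≤ B * w.length := by
  induction w with
  | nil => simp
  | cons l w ih =>
    calc wordLength S' (eval (l :: w))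
        ≤ wordLength S' (eval [l]) + wordLength S' (eval w) := by
          rw [eval_cons]; exact wordLength_mul_le hS' _ _
      _ ≤ B + B * w.length := add_le_add (hB _ (eval_singleton_mem l)) ih
      _ = B * (l :: w).length := by rw [List.length_cons]; ring

theorem wordDist_le_mul_wordDist (hS : Subgroup.closure S = ⊤) (hS' : Subgroup.closure S' = ⊤)
    {B : ℕ} (hB : ∀ t ∈ S ∪ S⁻¹, wordLength S' t ≤ B) (g h : G) :
    wordDist S' g h ≤ B * wordDist S g h := by
  obtain ⟨w, hw, hlen⟩ := exists_eval_eq_length_eq hS (g⁻¹ * h)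
  rw [wordDist_eq_wordLength, wordDist_eq_wordLength, ← hlen, ← hw]
  exact_mod_cast wordLength_eval_le_mul hS' hB w

end WordMetric

open WordMetric

theorem BoundedlyPresentedBy.closure_eq_top {G : Type*} [Group G] {S : Set G}
    (h : BoundedlyPresentedBy G S) : Subgroup.closure S = ⊤ := by
  obtain ⟨-, -, -, hsurj, -⟩ := h
  rwa [← Subtype.range_coe (s := S), ← FreeGroup.range_lift_eq_closure, MonoidHom.range_eq_top]

theorem BoundedlyPresentedBy.coarselySimplyConnectedWith {G : Type*} [Group G] {S : Set G}
    (h : BoundedlyPresentedBy G S) : CoarselySimplyConnectedWith (wordDist S) := by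
  have hS := h.closure_eq_top
  obtain ⟨n, R, hRlen, -, hker⟩ := h
  -- `r'` must dominate `r`, the relator lengths, and the two letters of a free cancellation.
  refine ⟨coarselyConnectedWith_wordDist hS, fun r => ⟨max r 0 + n + 2, by
    linarith [le_max_left r 0], fun x p hp => ?_⟩⟩
  set r' := max r 0 + n + 2 with hr'
  have hr'2 : 2 ≤ r' := by linarith [le_max_right r 0, n.cast_nonneg (α := ℝ)]
  have hrr' : r ≤ r' := by linarith [le_max_left r 0, n.cast_nonneg (α := ℝ)]
  have hnr' : (n : ℝ) ≤ r' := by linarith [le_max_right r 0]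
  obtain ⟨hpath, hhead, hlast⟩ := hp
  obtain ⟨q, rfl⟩ : ∃ q, p = x :: q := ⟨p.tail, (List.cons_head?_tail hhead).symm⟩
  rcases q.eq_nil_or_concat' with rfl | ⟨q, y, rfl⟩
  · exact ⟨0, .refl _⟩
  have hy : y = x := by simpa [List.getLast?_cons] using hlast
  subst y
  obtain ⟨w, hw, hpw⟩ := exists_pathEquiv_trail hS (by linarith) hrr' hpath hlast
  have hwR : FreeGroup.mk w ∈ Subgroup.normalClosure R := by
    rw [← hker, MonoidHom.mem_ker]
    exact hw.trans (inv_mul_cancel x)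
  have hfill := pathEquiv_trail_of_mem_normalClosure hr'2
    (hker ▸ Subgroup.subset_normalClosure)
    (fun ρ hρ => (hRlen ρ hρ).imp fun v hv => ⟨hv.1, (Nat.cast_le.2 hv.2).trans hnr'⟩) x hwR
  have hp' := hpath.imp fun a b hab => hab.trans hrr'
  have hdup : PathEquiv (wordDist S) r' (x :: (q ++ [x])) ((x :: (q ++ [x])) ++ [x]) :=
    .rel _ _ ⟨hp', hp'.concat_getLast hlast (by simp; linarith), x :: q, [x], x,
      by simp, by simp, by simp, by simp⟩
  exact ⟨1, hdup.trans (hpw.trans hfill)⟩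

theorem BoundedlyPresentedBy.of_coarselySimplyConnectedWith {G : Type*} [Group G] {S : Set G}
    (hS : Subgroup.closure S = ⊤) (h : CoarselySimplyConnectedWith (wordDist S)) :
    BoundedlyPresentedBy G S := by
  classical
  obtain ⟨r, hr, hloop⟩ := h.2 1
  have hn : 2 ≤ 3 * ⌊r⌋₊ := by have := Nat.le_floor (n := 1) (by simpa using hr); omega
  have hker : shortRelators S (3 * ⌊r⌋₊) ⊆ (FreeGroup.lift (fun s : S => (s : G))).ker := by
    rintro _ ⟨w, rfl, -, hw⟩
    exact hw
  refine ⟨3 * ⌊r⌋₊, shortRelators S _, fun _ ⟨w, hw, hlen, _⟩ => ⟨w, hw, hlen⟩,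
    lift_surjective_of_closure_eq_top hS,
    le_antisymm (fun z hz => ?_) (Subgroup.normalClosure_le_normal hker)⟩
  have hz₁ : eval z.toWord = 1 := by rw [eval, FreeGroup.mk_toWord]; exact hz
  obtain ⟨k, hk⟩ := hloop 1 (trail 1 z.toWord)
    ⟨isPathOf_trail le_rfl 1 _, head?_trail 1 _, by rw [getLast?_trail, hz₁, mul_one]⟩
  have hz : (z : ShortPresentation S (3 * ⌊r⌋₊)) = 1 := by
    rw [← FreeGroup.mk_toWord (x := z), ← pathWord_trail hS hn, hk.pathWord_eq hS le_rfl,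
      pathWord_replicate hS, QuotientGroup.mk_one]
  exact (QuotientGroup.eq_one_iff z).1 hz

theorem boundedlyPresentedBy_iff_coarselySimplyConnectedWith {G : Type*} [Group G] {S : Set G}
    (hS : Subgroup.closure S = ⊤) :
    BoundedlyPresentedBy G S ↔ CoarselySimplyConnectedWith (wordDist S) :=
  ⟨BoundedlyPresentedBy.coarselySimplyConnectedWith,
    BoundedlyPresentedBy.of_coarselySimplyConnectedWith hS⟩

section Topological

variable {G : Type*} [Group G] [TopologicalSpace G] [IsTopologicalGroup G] [T2Space G] {S S' : Set G}

open Filter Topology in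
/-- By Baire's theorem some power of `{1} ∪ S ∪ S⁻¹` has interior, and its translates are
neighbourhoods of bounded word length. -/
theorem exists_eventually_wordLength_le [BaireSpace G] (hSc : IsCompact S)
    (hS : Subgroup.closure S = ⊤) (x : G) : ∃ N : ℕ, ∀ᶠ y in 𝓝 x, wordLength S y ≤ N := by
  set V := insert 1 (S ∪ S⁻¹)
  have hV (m : ℕ) : IsCompact (V ^ m) := by
    induction m with
    | zero => simp
    | succ m ih => rw [pow_succ]; exact ih.mul ((hSc.union hSc.inv).insert 1)
  have hcover : ⋃ m : ℕ, V ^ m = Set.univ := Set.eq_univ_of_forall fun x =>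
    Set.mem_iUnion.2 ⟨_, Set.pow_subset_pow_left (Set.subset_insert _ _) (mem_pow_wordLength hS x)⟩
  obtain ⟨m₀, u, hu⟩ := nonempty_interior_of_iUnion_of_closed (fun m => (hV m).isClosed) hcover
  have hu_nhds : Tendsto (fun y => u * x⁻¹ * y) (𝓝 x) (𝓝 u) := by
    simpa using (continuous_const_mul (u * x⁻¹)).tendsto x
  refine ⟨wordLength S x + wordLength S u⁻¹ + m₀, ?_⟩
  filter_upwards [hu_nhds (isOpen_interior.mem_nhds hu)] with y hy
  calc wordLength S y = wordLength S (x * u⁻¹ * (u * x⁻¹ * y)) := by group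
    _ ≤ wordLength S (x * u⁻¹) + wordLength S (u * x⁻¹ * y) := wordLength_mul_le hS _ _
    _ ≤ wordLength S x + wordLength S u⁻¹ + m₀ := by
      gcongr
      · exact wordLength_mul_le hS _ _
      · exact wordLength_le_of_mem_pow hS (interior_subset hy)

theorem IsCompact.exists_wordLength_le [BaireSpace G] {K : Set G} (hK : IsCompact K)
    (hSc : IsCompact S) (hS : Subgroup.closure S = ⊤) : ∃ N : ℕ, ∀ x ∈ K, wordLength S x ≤ N := by
  obtain ⟨N, hN⟩ := hK.elim_directed_cover (fun N : ℕ => interior {y | wordLength S y ≤ N})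
    (fun _ => isOpen_interior)
    (fun x _ => have ⟨N, hN⟩ := exists_eventually_wordLength_le hSc hS x
      Set.mem_iUnion.2 ⟨N, mem_interior_iff_mem_nhds.2 hN⟩)
    (Monotone.directed_le fun _ _ hab => interior_mono fun _ hy => hy.trans hab)
  exact ⟨N, fun x hx => (interior_subset (hN hx) : x ∈ {y | wordLength S y ≤ N})⟩

theorem CoarselySimplyConnectedWith.wordDist_of_isCompact [BaireSpace G]
    (hSc : IsCompact S) (hS : Subgroup.closure S = ⊤) (hS'c : IsCompact S')
    (hS' : Subgroup.closure S' = ⊤) (h : CoarselySimplyConnectedWith (wordDist S)) :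
    CoarselySimplyConnectedWith (wordDist S') := by
  obtain ⟨B, hB⟩ := (hSc.union hSc.inv).exists_wordLength_le hS'c hS'
  obtain ⟨B', hB'⟩ := (hS'c.union hS'c.inv).exists_wordLength_le hSc hS
  exact h.of_le_mul B.cast_nonneg B'.cast_nonneg (wordDist_le_mul_wordDist hS hS' hB)
    (wordDist_le_mul_wordDist hS' hS hB')

end Topological

/-- a group `G` generated by a subset `S` is boundedly presented by `S` if and
only if `G`, with the word metric of `S`, is coarsely simply connected. In particular, a locally
compact compactly generated Hausdorff topological group is compactly presented if and only if it
is coarsely simply connected with respect to the word metric of some (equivalently, any) compact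
generating subset. -/
theorem boundedlyPresentedBy_iff_coarselySimplyConnected :
    (∀ (G : Type u) [Group G], ∀ S : Set G, Subgroup.closure S = ⊤ →
      (BoundedlyPresentedBy G S ↔ CoarselySimplyConnectedWith (wordDist S))) ∧
    (∀ (G : Type v) [Group G] [TopologicalSpace G] [IsTopologicalGroup G] [T2Space G]
        [LocallyCompactSpace G], (∃ S : Set G, IsCompact S ∧ Subgroup.closure S = ⊤) →
      ((CompactlyPresented G ↔
          ∃ S : Set G, IsCompact S ∧ Subgroup.closure S = ⊤ ∧
            CoarselySimplyConnectedWith (wordDist S)) ∧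
        (CompactlyPresented G ↔
          ∀ S : Set G, IsCompact S → Subgroup.closure S = ⊤ →
            CoarselySimplyConnectedWith (wordDist S)))) := by
  refine ⟨fun G _ S hS => boundedlyPresentedBy_iff_coarselySimplyConnectedWith hS,
    fun G _ _ _ _ _ ⟨S₀, hS₀c, hS₀⟩ => ⟨⟨?_, ?_⟩, ⟨?_, ?_⟩⟩⟩
  · rintro ⟨S, hSc, h⟩
    exact ⟨S, hSc, h.closure_eq_top, h.coarselySimplyConnectedWith⟩
  · rintro ⟨S, hSc, hS, h⟩
    exact ⟨S, hSc, .of_coarselySimplyConnectedWith hS h⟩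
  · rintro ⟨S, hSc, h⟩ S' hS'c hS'
    exact h.coarselySimplyConnectedWith.wordDist_of_isCompact hSc h.closure_eq_top hS'c hS'
  · exact fun h => ⟨S₀, hS₀c, .of_coarselySimplyConnectedWith hS₀ (h S₀ hS₀c hS₀)⟩
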